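/- arXiv:2205.02158 — 2 statements merged into one kernel-verified Lean document; each statement's English description precedes it below -/
import Mathlib

section
/- A weak almost contact metric structure (φ, Q, ξ, η, g) on a (2n+1)-dimensional smooth manifold M is weak Sasakian if and only if it is a Sasakian structure (i.e., a normal contact metric structure, with Q = id). -/
/-!
An algebraic model of the calculus of smooth vector fields on a smooth manifold
`M^{2n+p}`: `F` plays the role of the ordered commutative `ℝ`-algebra `C^∞(M)` of
smooth real-valued functions, and `V` the `F`-module `𝔛(M)` of smooth vector fields,
equipped with the derivation action `D` of vector fields on functions, the Lie
bracket of vector fields, a Riemannian metric `g` (a symmetric, `F`-bilinear,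
positive-definite form) and its Levi-Civita connection `nabla` (the unique metric,
torsion-free affine connection of `g`).
-/

noncomputable section

structure RiemannCalculus (F V : Type*) [CommRing F] [PartialOrder F] [IsOrderedRing F] [Algebra ℝ F]
    [AddCommGroup V] [Module F V] where
  /-- the derivation action `X φ` of a vector field `X` on a function `φ` -/
  D : V → F → F
  D_add_left : ∀ X Y φ, D (X + Y) φ = D X φ + D Y φ
  D_smul_left : ∀ (ψ : F) (X : V) (φ : F), D (ψ • X) φ = ψ * D X φ
  D_add_right : ∀ (X : V) (φ ψ : F), D X (φ + ψ) = D X φ + D X ψ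
  D_mul_right : ∀ (X : V) (φ ψ : F), D X (φ * ψ) = φ * D X ψ + ψ * D X φ
  D_algebraMap : ∀ (X : V) (r : ℝ), D X (algebraMap ℝ F r) = 0
  /-- the Lie bracket `[X, Y]` of vector fields -/
  bracket : V → V → V
  bracket_add_left : ∀ X Y Z, bracket (X + Y) Z = bracket X Z + bracket Y Z
  bracket_antisymm : ∀ X Y, bracket X Y = -bracket Y X
  bracket_leibniz : ∀ (X : V) (φ : F) (Y : V),
    bracket X (φ • Y) = φ • bracket X Y + D X φ • Y
  bracket_jacobi : ∀ X Y Z,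
    bracket X (bracket Y Z) = bracket (bracket X Y) Z + bracket Y (bracket X Z)
  D_bracket : ∀ X Y φ, D (bracket X Y) φ = D X (D Y φ) - D Y (D X φ)
  /-- the Riemannian metric `g` -/
  g : V → V → F
  g_symm : ∀ X Y, g X Y = g Y X
  g_add_left : ∀ X Y Z, g (X + Y) Z = g X Z + g Y Z
  g_smul_left : ∀ (φ : F) (X Y : V), g (φ • X) Y = φ * g X Y
  g_nonneg : ∀ X, 0 ≤ g X X
  g_definite : ∀ X, g X X = 0 → X = 0
  /-- the Levi-Civita connection `∇` of `g` -/
  nabla : V → V → V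
  nabla_add_left : ∀ X Y Z, nabla (X + Y) Z = nabla X Z + nabla Y Z
  nabla_smul_left : ∀ (φ : F) (X Y : V), nabla (φ • X) Y = φ • nabla X Y
  nabla_add_right : ∀ X Y Z, nabla X (Y + Z) = nabla X Y + nabla X Z
  nabla_leibniz : ∀ (X : V) (φ : F) (Y : V),
    nabla X (φ • Y) = φ • nabla X Y + D X φ • Y
  nabla_metric : ∀ X Y Z, D X (g Y Z) = g (nabla X Y) Z + g Y (nabla X Z)
  nabla_torsion_free : ∀ X Y, nabla X Y - nabla Y X = bracket X Y

/-- A metric weak `f`-structure `(f, Q, ξ_i, η^i, g)` on a smooth manifold `M^{2n+p}`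
(Rovenski–Wolak): `f` is a `(1,1)`-tensor field of rank `2n`, `Q` a nonsingular
`(1,1)`-tensor field, `ξ_1, …, ξ_p` vector fields spanning `ker f`, and `η^1, …, η^p`
the dual `1`-forms, satisfying `f³ + f∘Q = 0`, `Q ξᵢ = ξᵢ`,
`f² = -Q + Σᵢ ηⁱ ⊗ ξᵢ`, `ηⁱ(ξⱼ) = δⁱⱼ`, together with a compatible Riemannian
metric: `g(fX, fY) = g(X, QY) - Σᵢ ηⁱ(X) ηⁱ(QY)`. -/
structure MetricWeakFStructure (p : ℕ) (F V : Type*) [CommRing F] [PartialOrder F] [IsOrderedRing F] [Algebra ℝ F]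
    [AddCommGroup V] [Module F V] extends RiemannCalculus F V where
  f : V →ₗ[F] V
  Q : V →ₗ[F] V
  ξ : Fin p → V
  η : Fin p → V →ₗ[F] F
  Q_nonsingular : Function.Bijective Q
  f_cubed : ∀ X, f (f (f X)) + f (Q X) = 0
  Q_xi : ∀ i, Q (ξ i) = ξ i
  f_squared : ∀ X, f (f X) = -Q X + ∑ i, η i X • ξ i
  eta_xi : ∀ i j, η i (ξ j) = if i = j then (1 : F) else 0
  /-- the `ηⁱ` are the coframe dual to the `ξᵢ` w.r.t. the splitting
  `TM = f(TM) ⊕ ker f` (equivalently, `ηⁱ ∘ f = 0`). -/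
  eta_Q : ∀ i X, η i (Q X) = η i X
  /-- the `ξᵢ` span `ker f` -/
  ker_f_spanned : ∀ X, f X = 0 → X ∈ Submodule.span F (Set.range ξ)
  compatible : ∀ X Y, g (f X) (f Y) = g X (Q Y) - ∑ i, η i X * η i (Q Y)

namespace MetricWeakFStructure

variable {p : ℕ} {F V : Type*} [CommRing F] [PartialOrder F] [IsOrderedRing F] [Algebra ℝ F]
  [AddCommGroup V] [Module F V] (S : MetricWeakFStructure p F V)

/-- the fundamental 2-form `Φ(X,Y) = g(X, fY)` -/
def Phi (X Y : V) : F := S.g X (S.f Y)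

/-- `dηⁱ(X,Y) = (1/2){X(ηⁱ(Y)) - Y(ηⁱ(X)) - ηⁱ([X,Y])}` -/
def dEta (i : Fin p) (X Y : V) : F :=
  algebraMap ℝ F (1 / 2) *
    (S.D X (S.η i Y) - S.D Y (S.η i X) - S.η i (S.bracket X Y))

/-- `dΦ(X,Y,Z) = (1/3){XΦ(Y,Z) + YΦ(Z,X) + ZΦ(X,Y) - Φ([X,Y],Z) - Φ([Z,X],Y) - Φ([Y,Z],X)}` -/
def dPhi (X Y Z : V) : F :=
  algebraMap ℝ F (1 / 3) *
    (S.D X (S.Phi Y Z) + S.D Y (S.Phi Z X) + S.D Z (S.Phi X Y)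
      - S.Phi (S.bracket X Y) Z - S.Phi (S.bracket Z X) Y - S.Phi (S.bracket Y Z) X)

/-- the Nijenhuis torsion `[f,f](X,Y) = f²[X,Y] + [fX,fY] - f[fX,Y] - f[X,fY]` -/
def nijenhuis (X Y : V) : V :=
  S.f (S.f (S.bracket X Y)) + S.bracket (S.f X) (S.f Y)
    - S.f (S.bracket (S.f X) Y) - S.f (S.bracket X (S.f Y))

/-- `N⁽¹⁾ = [f,f] + 2 Σᵢ dηⁱ ⊗ ξᵢ` -/
def N1 (X Y : V) : V := S.nijenhuis X Y + ∑ i, (2 * S.dEta i X Y) • S.ξ i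

/-- the Lie derivative of `f`: `(£_Z f)X = [Z, fX] - f[Z,X]` -/
def lieD_f (Z X : V) : V := S.bracket Z (S.f X) - S.f (S.bracket Z X)

/-- the Lie derivative of `ηʲ`: `(£_Z ηʲ)X = Z(ηʲ(X)) - ηʲ([Z,X])` -/
def lieD_eta (j : Fin p) (Z X : V) : F := S.D Z (S.η j X) - S.η j (S.bracket Z X)

/-- the Lie derivative of `g`: `(£_Z g)(X,Y) = Z(g(X,Y)) - g([Z,X],Y) - g(X,[Z,Y])` -/
def lieD_g (Z X Y : V) : F :=
  S.D Z (S.g X Y) - S.g (S.bracket Z X) Y - S.g X (S.bracket Z Y)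

/-- `N⁽²⁾ᵢ(X,Y) = (£_{fX} ηⁱ)Y - (£_{fY} ηⁱ)X` -/
def N2 (i : Fin p) (X Y : V) : F := S.lieD_eta i (S.f X) Y - S.lieD_eta i (S.f Y) X

/-- `N⁽³⁾ᵢ = £_{ξᵢ} f` -/
def N3 (i : Fin p) (X : V) : V := S.lieD_f (S.ξ i) X

/-- `N⁽⁴⁾ᵢⱼ = £_{ξᵢ} ηʲ` -/
def N4 (i j : Fin p) (X : V) : F := S.lieD_eta j (S.ξ i) X

/-- `Q̃ = Q - id` -/
def Qt (X : V) : V := S.Q X - X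

/-- `X^⊤ = X - Σᵢ ηⁱ(X) ξᵢ`, the `f(TM)`-component of `X` -/
def top (X : V) : V := X - ∑ i, S.η i X • S.ξ i

/-- `N⁽⁵⁾(X,Y,Z) = (fZ)(g(X^⊤,Q̃Y)) - (fY)(g(X^⊤,Q̃Z)) + g([X,fZ]^⊤,Q̃Y)
  - g([X,fY]^⊤,Q̃Z) + g([Y,fZ]^⊤ - [Z,fY]^⊤ - f[Y,Z], Q̃X)` -/
def N5 (X Y Z : V) : F :=
  S.D (S.f Z) (S.g (S.top X) (S.Qt Y)) - S.D (S.f Y) (S.g (S.top X) (S.Qt Z))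
    + S.g (S.top (S.bracket X (S.f Z))) (S.Qt Y)
    - S.g (S.top (S.bracket X (S.f Y))) (S.Qt Z)
    + S.g (S.top (S.bracket Y (S.f Z)) - S.top (S.bracket Z (S.f Y))
        - S.f (S.bracket Y Z)) (S.Qt X)

/-- the covariant derivative of `f`: `(∇_X f)Y = ∇_X(fY) - f(∇_X Y)` -/
def nablaF (X Y : V) : V := S.nabla X (S.f Y) - S.f (S.nabla X Y)

/-- `hᵢ = (1/2) £_{ξᵢ} f` -/
def hT (i : Fin p) (X : V) : V := algebraMap ℝ F (1 / 2) • S.N3 i X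

/-- a vector field `Z` is Killing if `£_Z g = 0` -/
def IsKilling (Z : V) : Prop := ∀ X Y : V, S.lieD_g Z X Y = 0

/-- the structure is normal if `N⁽¹⁾ = 0` -/
def Normal : Prop := ∀ X Y : V, S.N1 X Y = 0

/-- a weak K-structure: normal with `dΦ = 0` -/
def WeakK : Prop := S.Normal ∧ ∀ X Y Z : V, S.dPhi X Y Z = 0

/-- a weak almost S-structure: `dηⁱ = Φ` for all `i` -/
def WeakAlmostS : Prop := ∀ (i : Fin p) (X Y : V), S.dEta i X Y = S.Phi X Y

/-- a weak S-structure: a weak K-structure with `dηⁱ = Φ` for all `i` -/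
def WeakS : Prop := S.WeakK ∧ S.WeakAlmostS

/-- a weak almost C-structure: `dΦ = 0` and `dηⁱ = 0` for all `i` -/
def WeakAlmostC : Prop :=
  (∀ X Y Z : V, S.dPhi X Y Z = 0) ∧ ∀ (i : Fin p) (X Y : V), S.dEta i X Y = 0

/-- a weak C-structure: a weak K-structure with `dηⁱ = 0` for all `i` -/
def WeakC : Prop := S.WeakK ∧ ∀ (i : Fin p) (X Y : V), S.dEta i X Y = 0

end MetricWeakFStructure

open MetricWeakFStructure

section Aux

variable {F V : Type*} [CommRing F] [PartialOrder F] [IsOrderedRing F] [Algebra ℝ F]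
  [AddCommGroup V] [Module F V] (S : MetricWeakFStructure 1 F V)

lemma aux_g_zero_left (Y : V) : S.g 0 Y = 0 := by
  have h := S.g_smul_left 0 0 Y
  simpa using h

lemma aux_g_zero_right (X : V) : S.g X 0 = 0 := by
  rw [S.g_symm]; exact aux_g_zero_left S X

lemma aux_g_add_right (X Y Z : V) : S.g X (Y + Z) = S.g X Y + S.g X Z := by
  rw [S.g_symm, S.g_add_left, S.g_symm Y, S.g_symm Z]

lemma aux_g_smul_right (c : F) (X Y : V) : S.g X (c • Y) = c * S.g X Y := by
  rw [S.g_symm, S.g_smul_left, S.g_symm]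

lemma aux_g_neg_left (X Y : V) : S.g (-X) Y = -S.g X Y := by
  have h := S.g_smul_left (-1) X Y
  simpa using h

lemma aux_g_neg_right (X Y : V) : S.g X (-Y) = -S.g X Y := by
  rw [S.g_symm, aux_g_neg_left, S.g_symm]

lemma aux_g_sub_left (X Y Z : V) : S.g (X - Y) Z = S.g X Z - S.g Y Z := by
  rw [sub_eq_add_neg, S.g_add_left, aux_g_neg_left, sub_eq_add_neg]

lemma aux_D_zero (X : V) : S.D X 0 = 0 := by
  have h := S.D_add_right X 0 0
  simpa using h

lemma aux_fsq (X : V) : S.f (S.f X) = -S.Q X + S.η 0 X • S.ξ 0 := by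
  rw [S.f_squared]
  simp

lemma aux_eta_xi0 : S.η 0 (S.ξ 0) = 1 := by
  simpa using S.eta_xi 0 0

lemma aux_phi_xi : S.f (S.ξ 0) = 0 := by
  have h2 : S.f (S.f (S.ξ 0)) = 0 := by
    rw [aux_fsq, S.Q_xi, aux_eta_xi0, one_smul, neg_add_cancel]
  have h3 := S.f_cubed (S.ξ 0)
  rw [S.Q_xi, h2, map_zero, zero_add] at h3
  exact h3

lemma aux_g_xi (X : V) : S.g X (S.ξ 0) = S.η 0 X := by
  have h := S.compatible X (S.ξ 0)
  rw [aux_phi_xi, aux_g_zero_right, S.Q_xi] at h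
  simp only [Fin.sum_univ_one, aux_eta_xi0, mul_one] at h
  linear_combination -h

lemma aux_eta_phi (X : V) : S.η 0 (S.f X) = 0 := by
  have key : ∀ W : V, S.η 0 (S.f (S.Q W)) = 0 := by
    intro W
    have h1 := S.f_cubed W
    rw [aux_fsq S (S.f W)] at h1
    have h2 := congrArg (S.η 0) h1
    simp only [map_add, map_neg, map_smul, map_zero, smul_eq_mul, aux_eta_xi0, mul_one,
      S.eta_Q] at h2
    linear_combination h2
  obtain ⟨W, hW⟩ := S.Q_nonsingular.2 X
  rw [← hW]
  exact key W

lemma aux_g_xi_phi (Y : V) : S.g (S.ξ 0) (S.f Y) = 0 := by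
  rw [S.g_symm, aux_g_xi, aux_eta_phi]

/-- Q is twisted-skew against φ (holds for any metric weak f-structure with p = 1). -/
lemma aux_keyB (X Y : V) : S.g (S.f X) (S.Q Y) = -S.g (S.Q X) (S.f Y) := by
  have h := S.compatible (S.f X) Y
  rw [aux_fsq S X] at h
  simp only [Fin.sum_univ_one, aux_eta_phi, zero_mul, sub_zero] at h
  rw [S.g_add_left, aux_g_neg_left, S.g_smul_left, aux_g_xi_phi, mul_zero, add_zero] at h
  linear_combination -h

lemma aux_half_two : (algebraMap ℝ F (1 / 2)) * 2 = 1 := by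
  have h2 : (2 : F) = algebraMap ℝ F 2 := by
    rw [map_ofNat]
  rw [h2, ← map_mul]
  norm_num

end Aux

section Main

variable {F V : Type*} [CommRing F] [PartialOrder F] [IsOrderedRing F] [Algebra ℝ F]
  [AddCommGroup V] [Module F V] (S : MetricWeakFStructure 1 F V)
  (hN : S.Normal) (hd : ∀ X Y : V, S.dEta 0 X Y = S.Phi X Y)

include hN hd

lemma aux_eta_bracket (X Y : V) :
    S.η 0 (S.bracket (S.f X) (S.f Y)) = -(2 * S.g X (S.f Y)) := by
  have h := hN X Y
  unfold MetricWeakFStructure.N1 MetricWeakFStructure.nijenhuis at h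
  simp only [Fin.sum_univ_one] at h
  have h2 := congrArg (S.η 0) h
  simp only [map_add, map_sub, map_smul, map_zero, smul_eq_mul, aux_eta_phi, aux_eta_xi0,
    mul_one] at h2
  have hd' := hd X Y
  unfold MetricWeakFStructure.Phi at hd'
  rw [hd'] at h2
  linear_combination h2

lemma aux_keyA (X Y : V) : S.g (S.f X) (S.Q Y) = -S.g X (S.f Y) := by
  have hdd := hd (S.f X) (S.f Y)
  unfold MetricWeakFStructure.dEta MetricWeakFStructure.Phi at hdd
  rw [aux_eta_phi, aux_eta_phi, aux_D_zero, aux_D_zero, aux_eta_bracket S hN hd] at hdd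
  rw [aux_fsq S Y] at hdd
  rw [aux_g_add_right, aux_g_neg_right, aux_g_smul_right] at hdd
  rw [aux_g_xi, aux_eta_phi, mul_zero, add_zero] at hdd
  have hL : algebraMap ℝ F (1 / 2) * (0 - 0 - -(2 * S.g X (S.f Y))) = S.g X (S.f Y) := by
    calc algebraMap ℝ F (1 / 2) * (0 - 0 - -(2 * S.g X (S.f Y)))
        = (algebraMap ℝ F (1 / 2) * 2) * S.g X (S.f Y) := by ring
      _ = 1 * S.g X (S.f Y) := by rw [aux_half_two]
      _ = S.g X (S.f Y) := one_mul _
  rw [hL] at hdd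
  linear_combination hdd

lemma aux_Qtilde_perp (X Y : V) : S.g (S.Q X - X) (S.f Y) = 0 := by
  have hA := aux_keyA S hN hd X Y
  have hB := aux_keyB S X Y
  rw [aux_g_sub_left]
  have : S.g (S.Q X) (S.f Y) = S.g X (S.f Y) := by linear_combination hB - hA
  rw [this, sub_self]

lemma aux_Q_eq_id (X : V) : S.Q X = X := by
  set Z := S.Q X - X with hZ
  have hηZ : S.η 0 Z = 0 := by
    rw [hZ, map_sub, S.eta_Q, sub_self]
  have hgZ : ∀ Y : V, S.g Z (S.f Y) = 0 := fun Y => aux_Qtilde_perp S hN hd X Y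
  have hQZ : S.g Z (S.Q Z) = 0 := by
    have hq : S.Q Z = -(S.f (S.f Z)) := by
      rw [aux_fsq S Z, hηZ, zero_smul, add_zero, neg_neg]
    rw [hq, aux_g_neg_right, hgZ (S.f Z), neg_zero]
  have hff : S.g (S.f Z) (S.f Z) = 0 := by
    have h := S.compatible Z Z
    simp only [Fin.sum_univ_one] at h
    rw [hηZ, zero_mul, sub_zero, hQZ] at h
    exact h
  have hfZ : S.f Z = 0 := S.g_definite _ hff
  have hspan := S.ker_f_spanned Z hfZ
  have hrange : Set.range S.ξ = {S.ξ 0} := by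
    rw [Set.range_unique]
    rfl
  rw [hrange, Submodule.mem_span_singleton] at hspan
  obtain ⟨c, hc⟩ := hspan
  have hc0 : c = 0 := by
    have h := congrArg (S.η 0) hc
    rw [map_smul, smul_eq_mul, aux_eta_xi0, mul_one, hηZ] at h
    exact h
  have : Z = 0 := by rw [← hc, hc0, zero_smul]
  have := sub_eq_zero.mp this
  exact this

end Main

/-- A weak almost contact metric structure `(φ, Q, ξ, η, g)` on a
`(2n+1)`-dimensional manifold (a metric weak `f`-structure with `p = 1`) is weak
Sasakian (normal and `dη = Φ`) if and only if it is a Sasakian structure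
(a normal contact metric structure, with `Q = id`). -/
theorem statement_15 {F V : Type*} [CommRing F] [PartialOrder F] [IsOrderedRing F] [Algebra ℝ F]
    [AddCommGroup V] [Module F V] (S : MetricWeakFStructure 1 F V) :
    (S.Normal ∧ ∀ X Y : V, S.dEta 0 X Y = S.Phi X Y) ↔
      ((S.Normal ∧ ∀ X Y : V, S.dEta 0 X Y = S.Phi X Y) ∧ ∀ X : V, S.Q X = X) := by
  constructor
  · rintro ⟨hN, hd⟩
    exact ⟨⟨hN, hd⟩, fun X => aux_Q_eq_id S hN hd X⟩
  · rintro ⟨h, _⟩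
    exact h
end
end

section
/- For a weak almost S-structure (f, Q, ξ_i, η^i, g), one has g(∇_X ξ_i, ξ_k) = 0 for every vector field X and all 1 ≤ i, k ≤ p; in particular, [ξ_i, ξ_j] = 0 and ∇_{ξ_i} ξ_j = 0 for all i, j. -/
/-!
An algebraic model of the calculus of smooth vector fields on a smooth manifold
`M^{2n+p}`: `F` plays the role of the ordered commutative `ℝ`-algebra `C^∞(M)` of
smooth real-valued functions, and `V` the `F`-module `𝔛(M)` of smooth vector fields,
equipped with the derivation action `D` of vector fields on functions, the Lie
bracket of vector fields, a Riemannian metric `g` (a symmetric, `F`-bilinear,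
positive-definite form) and its Levi-Civita connection `nabla` (the unique metric,
torsion-free affine connection of `g`).
-/

noncomputable section

namespace MetricWeakFStructure

variable {p : ℕ} {F V : Type*} [CommRing F] [PartialOrder F] [IsOrderedRing F] [Algebra ℝ F]
  [AddCommGroup V] [Module F V] (S : MetricWeakFStructure p F V)

lemma aux_half {a : F} (h : a + a = 0) : a = 0 := by
  have h1 : (algebraMap ℝ F (1/2) + algebraMap ℝ F (1/2)) = 1 := by
    rw [← map_add]; norm_num
  calc a = (algebraMap ℝ F (1/2) + algebraMap ℝ F (1/2)) * a := by rw [h1, one_mul]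
    _ = algebraMap ℝ F (1/2) * (a + a) := by ring
    _ = 0 := by rw [h, mul_zero]

lemma aux_double {b c : F} (h : algebraMap ℝ F (1/2) * b = c) : b = c + c := by
  have h1 : (algebraMap ℝ F (1/2) + algebraMap ℝ F (1/2)) = 1 := by
    rw [← map_add]; norm_num
  calc b = (algebraMap ℝ F (1/2) + algebraMap ℝ F (1/2)) * b := by rw [h1, one_mul]
    _ = algebraMap ℝ F (1/2) * b + algebraMap ℝ F (1/2) * b := by ring
    _ = c + c := by rw [h]

/-- `g(·, X)` as a linear map. -/
def gL (X : V) : V →ₗ[F] F where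
  toFun Y := S.g Y X
  map_add' a b := S.g_add_left a b X
  map_smul' φ a := S.g_smul_left φ a X

@[simp] lemma gL_apply (X Y : V) : S.gL X Y = S.g Y X := rfl

lemma g_zero_left (X : V) : S.g 0 X = 0 := by
  rw [← zero_smul F (0:V), S.g_smul_left, zero_mul]

lemma g_zero_right (X : V) : S.g X 0 = 0 := by
  rw [S.g_symm]; exact S.g_zero_left X

lemma g_neg_left (X Y : V) : S.g (-X) Y = -S.g X Y := by
  rw [← neg_one_smul F X, S.g_smul_left, neg_one_mul]

lemma g_sub_left (X Y Z : V) : S.g (X - Y) Z = S.g X Z - S.g Y Z := by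
  rw [sub_eq_add_neg, S.g_add_left, S.g_neg_left, ← sub_eq_add_neg]

lemma D_one (X : V) : S.D X (1:F) = 0 := by
  have h := S.D_algebraMap X 1; rwa [map_one] at h

lemma D_zero (X : V) : S.D X (0:F) = 0 := by
  have h := S.D_algebraMap X 0; rwa [map_zero] at h

lemma D_eta_xi (X : V) (i j : Fin p) : S.D X (S.η i (S.ξ j)) = 0 := by
  rw [S.eta_xi]
  split_ifs
  · exact S.D_one X
  · exact S.D_zero X

lemma f_xi (j : Fin p) : S.f (S.ξ j) = 0 := by
  have hsum : ∑ i, S.η i (S.ξ j) • S.ξ i = S.ξ j := by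
    simp [S.eta_xi, ite_smul]
  have h2 : S.f (S.f (S.ξ j)) = 0 := by
    rw [S.f_squared, S.Q_xi, hsum, neg_add_cancel]
  have h3 := S.f_cubed (S.ξ j)
  rwa [h2, map_zero, S.Q_xi, zero_add] at h3

lemma g_xi (X : V) (j : Fin p) : S.g X (S.ξ j) = S.η j X := by
  have h := S.compatible X (S.ξ j)
  rw [S.f_xi, S.Q_xi, S.g_zero_right] at h
  have hsum : ∑ i, S.η i X * S.η i (S.ξ j) = S.η j X := by
    simp [S.eta_xi, mul_ite]
  rw [hsum] at h
  exact (eq_of_sub_eq_zero h.symm)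

lemma Phi_antisymm (hS : S.WeakAlmostS) (i : Fin p) (X Y : V) :
    S.Phi X Y + S.Phi Y X = 0 := by
  rw [← hS i X Y, ← hS i Y X]
  unfold dEta
  rw [← mul_add]
  have h : (S.D X (S.η i Y) - S.D Y (S.η i X) - S.η i (S.bracket X Y))
      + (S.D Y (S.η i X) - S.D X (S.η i Y) - S.η i (S.bracket Y X)) = 0 := by
    rw [S.bracket_antisymm Y X, map_neg]; ring
  rw [h, mul_zero]

lemma eta_f (hS : S.WeakAlmostS) (i : Fin p) (X : V) : S.η i (S.f X) = 0 := by
  have h1 : S.Phi X (S.ξ i) = 0 := by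
    unfold Phi; rw [S.f_xi, S.g_zero_right]
  have h2 := S.Phi_antisymm hS i X (S.ξ i)
  rw [h1, zero_add] at h2
  unfold Phi at h2
  rwa [S.g_symm, S.g_xi] at h2

lemma D_xi_eta (hS : S.WeakAlmostS) (m k : Fin p) (X : V) :
    S.D (S.ξ k) (S.η m X) = S.η m (S.bracket (S.ξ k) X) := by
  have hphi : S.Phi (S.ξ k) X = 0 := by
    unfold Phi; rw [S.g_symm, S.g_xi]; exact S.eta_f hS k X
  have h := hS m (S.ξ k) X
  rw [hphi] at h
  unfold dEta at h
  have h3 := aux_double h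
  rw [add_zero] at h3
  rw [S.D_eta_xi, sub_zero] at h3
  exact sub_eq_zero.mp h3

lemma eta_bracket_xi (hS : S.WeakAlmostS) (m i k : Fin p) :
    S.η m (S.bracket (S.ξ i) (S.ξ k)) = 0 := by
  rw [← S.D_xi_eta hS m i (S.ξ k)]
  exact S.D_eta_xi _ m k

lemma Phi_bracket_xi (hS : S.WeakAlmostS) (i k : Fin p) (X : V) :
    S.Phi (S.bracket (S.ξ i) (S.ξ k)) X = 0 := by
  have h := hS i (S.bracket (S.ξ i) (S.ξ k)) X
  unfold dEta at h
  have h1 : S.D (S.bracket (S.ξ i) (S.ξ k)) (S.η i X)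
      = S.η i (S.bracket (S.ξ i) (S.bracket (S.ξ k) X))
        - S.η i (S.bracket (S.ξ k) (S.bracket (S.ξ i) X)) := by
    rw [S.D_bracket]
    simp only [S.D_xi_eta hS]
  have h2 : S.bracket (S.bracket (S.ξ i) (S.ξ k)) X
      = S.bracket (S.ξ i) (S.bracket (S.ξ k) X)
        - S.bracket (S.ξ k) (S.bracket (S.ξ i) X) := by
    have hj := S.bracket_jacobi (S.ξ i) (S.ξ k) X
    exact (eq_sub_of_add_eq hj.symm)
  have hinner : S.D (S.bracket (S.ξ i) (S.ξ k)) (S.η i X)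
      - S.D X (S.η i (S.bracket (S.ξ i) (S.ξ k)))
      - S.η i (S.bracket (S.bracket (S.ξ i) (S.ξ k)) X) = 0 := by
    rw [h1, S.eta_bracket_xi hS i i k, S.D_zero, h2, map_sub]
    ring
  rw [hinner, mul_zero] at h
  exact h.symm

lemma bracket_xi (hS : S.WeakAlmostS) (i k : Fin p) :
    S.bracket (S.ξ i) (S.ξ k) = 0 := by
  have key : ∀ Y, S.g Y (S.bracket (S.ξ i) (S.ξ k)) = 0 := by
    intro Y
    obtain ⟨W, hW⟩ := S.Q_nonsingular.2 Y
    have hQ : S.Q W = ∑ m, S.η m W • S.ξ m - S.f (S.f W) := by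
      rw [S.f_squared W]; abel
    rw [← hW, hQ, ← S.gL_apply, map_sub, map_sum]
    have hterm : ∀ m ∈ Finset.univ,
        S.gL (S.bracket (S.ξ i) (S.ξ k)) (S.η m W • S.ξ m) = 0 := by
      intro m _
      rw [map_smul, gL_apply, S.g_symm, S.g_xi, S.eta_bracket_xi hS m i k,
        smul_eq_mul, mul_zero]
    rw [Finset.sum_eq_zero hterm, zero_sub]
    have hf : S.gL (S.bracket (S.ξ i) (S.ξ k)) (S.f (S.f W)) = 0 := by
      rw [gL_apply, S.g_symm]
      exact S.Phi_bracket_xi hS i k (S.f W)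
    rw [hf, neg_zero]
  exact S.g_definite _ (key _)

lemma key_E (hS : S.WeakAlmostS) (k : Fin p) (X Y : V) :
    S.g Y (S.nabla X (S.ξ k)) - S.g X (S.nabla Y (S.ξ k)) = S.Phi X Y + S.Phi X Y := by
  have h := hS k X Y
  unfold dEta at h
  have h2 := aux_double h
  rw [← h2, ← S.g_xi Y k, ← S.g_xi X k, ← S.g_xi (S.bracket X Y) k,
    S.nabla_metric X Y (S.ξ k), S.nabla_metric Y X (S.ξ k),
    ← S.nabla_torsion_free, S.g_sub_left]
  ring

lemma g_nabla_xi_anti (X : V) (i k : Fin p) :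
    S.g (S.nabla X (S.ξ i)) (S.ξ k) + S.g (S.ξ i) (S.nabla X (S.ξ k)) = 0 := by
  have h := S.nabla_metric X (S.ξ i) (S.ξ k)
  have hc : S.D X (S.g (S.ξ i) (S.ξ k)) = 0 := by
    rw [S.g_xi]; exact S.D_eta_xi X k i
  rw [hc] at h
  exact h.symm

lemma g_nabla_xi (hS : S.WeakAlmostS) (X : V) (i k : Fin p) :
    S.g X (S.nabla (S.ξ i) (S.ξ k)) = - S.g (S.nabla X (S.ξ i)) (S.ξ k) := by
  have hE := S.key_E hS k X (S.ξ i)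
  have hphi : S.Phi X (S.ξ i) = 0 := by
    unfold Phi; rw [S.f_xi, S.g_zero_right]
  rw [hphi, add_zero] at hE
  have ha := S.g_nabla_xi_anti X i k
  linear_combination -hE + ha

lemma nabla_xi_xi (hS : S.WeakAlmostS) (i k : Fin p) :
    S.nabla (S.ξ i) (S.ξ k) = 0 := by
  have hsymm : S.nabla (S.ξ i) (S.ξ k) = S.nabla (S.ξ k) (S.ξ i) := by
    have h := S.nabla_torsion_free (S.ξ i) (S.ξ k)
    rw [S.bracket_xi hS i k] at h
    exact sub_eq_zero.mp h
  have key : ∀ X, S.g X (S.nabla (S.ξ i) (S.ξ k)) = 0 := by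
    intro X
    have h1 := S.g_nabla_xi hS X i k
    have h2 := S.g_nabla_xi hS X k i
    rw [← hsymm] at h2
    have ha := S.g_nabla_xi_anti X i k
    have hs : S.g (S.nabla X (S.ξ k)) (S.ξ i) = S.g (S.ξ i) (S.nabla X (S.ξ k)) :=
      S.g_symm _ _
    apply aux_half
    linear_combination h1 + h2 - ha - hs
  have h := key (S.nabla (S.ξ i) (S.ξ k))
  exact S.g_definite _ h

end MetricWeakFStructure

open MetricWeakFStructure

/-- For a weak almost S-structure, `g(∇_X ξᵢ, ξ_k) = 0` for every
vector field `X` and all `i, k`; in particular, `[ξᵢ, ξⱼ] = 0` and `∇_{ξᵢ} ξⱼ = 0`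
for all `i, j`. -/
theorem statement_19 {p : ℕ} {F V : Type*} [CommRing F] [PartialOrder F] [IsOrderedRing F] [Algebra ℝ F]
    [AddCommGroup V] [Module F V] (S : MetricWeakFStructure p F V)
    (hS : S.WeakAlmostS) :
    (∀ (X : V) (i k : Fin p), S.g (S.nabla X (S.ξ i)) (S.ξ k) = 0) ∧
    (∀ i j : Fin p, S.bracket (S.ξ i) (S.ξ j) = 0) ∧
    (∀ i j : Fin p, S.nabla (S.ξ i) (S.ξ j) = 0) := by
  refine ⟨?_, fun i j => S.bracket_xi hS i j, fun i j => S.nabla_xi_xi hS i j⟩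
  intro X i k
  have h := S.g_nabla_xi hS X i k
  rw [S.nabla_xi_xi hS, S.g_zero_right] at h
  exact (neg_eq_zero.mp h.symm)
end
end
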